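/- Let L be a lattice in ℝ^m (a full-rank ℤ-submodule with integral inner products) and let M be a sublattice of L whose determinant (determinant of a Gram matrix of a basis of M) is squarefree. Then M is primitive in L, i.e., M = M* ∩ L, where M* is the dual lattice of M inside M ⊗ ℚ. -/

import Mathlib

/-!
Write `u = ∑ cᵢ bᵢ` with `c ∈ ℚʳ`. Integrality of the `⟪u, bⱼ⟫` says `k = G c ∈ ℤʳ`, and
integrality of `⟪u, u⟫` says `cᵀ G c ∈ ℤ`. With `D = det G`, the vector `a = adj G · k = D c` is
integral, `G a = D k` and `aᵀ G a = D² cᵀ G c`. Replacing the `i`-th column of the identity by `a`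
gives a matrix `U` of determinant `aᵢ` for which `Uᵀ G U` has its `i`-th row and column divisible
by `D` and its `(i, i)` entry `aᵀ G a` divisible by `D²`. Hence `D² ∣ aᵢ² D`, i.e. `D ∣ aᵢ²`, and
since `D` is squarefree `D ∣ aᵢ`: the coefficients `cᵢ = aᵢ / D` are integers and `u ∈ M`.
-/

open scoped RealInnerProductSpace

namespace Matrix

variable {n R : Type*} [Fintype n] [DecidableEq n] [CommRing R]

theorem det_one_updateCol (i : n) (x : n → R) :
    ((1 : Matrix n n R).updateCol i x).det = x i := by
  rw [← cramer_apply, cramer_one]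
  rfl

/-- In the Leibniz expansion every term either contains the corner entry or two distinct
entries, one from row `i` and one from column `i`. -/
theorem sq_dvd_det_of_dvd_row_of_dvd_col (H : Matrix n n R) (i : n) {d : R}
    (hrow : ∀ k, d ∣ H i k) (hcol : ∀ j, d ∣ H j i) (hii : d ^ 2 ∣ H i i) :
    d ^ 2 ∣ H.det := by
  rw [det_apply]
  refine Finset.dvd_sum fun σ _ => ?_
  rw [Units.smul_def, zsmul_eq_mul]
  refine Dvd.dvd.mul_left ?_ _
  rw [← Finset.mul_prod_erase _ _ (Finset.mem_univ i)]
  by_cases hσ : σ i = i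
  · rw [hσ]
    exact hii.mul_right _
  · have hj : σ⁻¹ i ∈ Finset.univ.erase i := by
      rw [Finset.mem_erase, Ne, Equiv.Perm.inv_eq_iff_eq]
      exact ⟨Ne.symm hσ, Finset.mem_univ _⟩
    rw [pow_two]
    refine mul_dvd_mul (hcol _) (dvd_trans ?_ (Finset.dvd_prod_of_mem (fun j => H (σ j) j) hj))
    simpa using hrow (σ⁻¹ i)

theorem IsSymm.sq_dvd_sq_mul_det_of_dvd_mulVec {G : Matrix n n R} (hG : G.IsSymm) (x : n → R)
    (i : n) {d : R} (hGx : ∀ j, d ∣ (G *ᵥ x) j) (hxGx : d ^ 2 ∣ x ⬝ᵥ (G *ᵥ x)) :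
    d ^ 2 ∣ x i ^ 2 * G.det := by
  set U := (1 : Matrix n n R).updateCol i x
  set H := Uᵀ * G * U
  have hH : H.IsSymm := by
    simp only [H, IsSymm, transpose_mul, transpose_transpose, hG.eq, Matrix.mul_assoc]
  have hcol : ∀ j, H j i = (Uᵀ *ᵥ (G *ᵥ x)) j := by
    intro j
    rw [mulVec_mulVec]
    simp [H, U, mul_apply, mulVec, dotProduct]
  have hcol_dvd : ∀ j, d ∣ H j i := fun j => by
    rw [hcol]
    exact Finset.dvd_sum fun l _ => (hGx l).mul_left _
  have hdet : H.det = x i ^ 2 * G.det := by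
    simp only [H, det_mul, det_transpose, U, det_one_updateCol]
    ring
  rw [← hdet]
  refine sq_dvd_det_of_dvd_row_of_dvd_col H i (fun k => hH.apply i k ▸ hcol_dvd k) hcol_dvd ?_
  rw [hcol, mulVec_transpose]
  simpa [U, vecMul, dotProduct, mul_comm] using hxGx

end Matrix

open Matrix

section Integrality

variable {n : Type*} [Fintype n] [DecidableEq n]

theorem RingHom.comp_adjugate_mulVec {R S : Type*} [CommRing R] [CommRing S] (f : R →+* S)
    (G : Matrix n n R) {c : n → S} {k : n → R} (h : G.map f *ᵥ c = f ∘ k) :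
    f ∘ (G.adjugate *ᵥ k) = f G.det • c := by
  ext i
  rw [Function.comp_apply, RingHom.map_mulVec, ← h, ← f.mapMatrix_apply, f.map_adjugate,
    f.map_det, f.mapMatrix_apply, mulVec_mulVec, adjugate_mul, smul_mulVec, one_mulVec]

theorem Matrix.IsSymm.exists_intCast_eq_of_squarefree_det {G : Matrix n n ℤ} (hG : G.IsSymm)
    (hsf : Squarefree G.det) {c : n → ℚ} (hdual : ∀ j, ∃ z : ℤ, (G.map (↑) *ᵥ c) j = z)
    (hnorm : ∃ z : ℤ, c ⬝ᵥ (G.map (↑) *ᵥ c) = z) :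
    ∀ i, ∃ z : ℤ, c i = z := by
  choose k hk using hdual
  obtain ⟨N, hN⟩ := hnorm
  set D := G.det
  have hD : D ≠ 0 := hsf.ne_zero
  set a := G.adjugate *ᵥ k
  have ha : ∀ i, (a i : ℚ) = D * c i := fun i =>
    congrFun ((Int.castRingHom ℚ).comp_adjugate_mulVec G (funext hk)) i
  have hGa : G *ᵥ a = D • k := by
    rw [mulVec_mulVec, mul_adjugate, smul_mulVec, one_mulVec]
  have hak : a ⬝ᵥ k = D * N := by
    have : ((a ⬝ᵥ k : ℤ) : ℚ) = D * N := by
      simp only [dotProduct, Int.cast_sum, Int.cast_mul, ha, ← hN, ← hk, Finset.mul_sum, mul_assoc]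
    exact_mod_cast this
  intro i
  have hsq : D ^ 2 ∣ a i ^ 2 * D := by
    refine hG.sq_dvd_sq_mul_det_of_dvd_mulVec a i (fun j => ?_) ?_
    · simp [hGa]
    · rw [hGa, dotProduct_smul, hak, smul_eq_mul, ← mul_assoc, ← pow_two]
      exact dvd_mul_right _ _
  have hDa : D ∣ a i := by
    rw [← hsf.dvd_pow_iff_dvd two_ne_zero]
    rw [pow_two D, mul_comm] at hsq
    exact (mul_dvd_mul_iff_right hD).mp hsq
  obtain ⟨e, he⟩ := hDa
  refine ⟨e, mul_left_cancel₀ (Int.cast_ne_zero.mpr hD) ?_⟩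
  rw [← ha, he, Int.cast_mul]

end Integrality

theorem Submodule.span_eq_span_range_basis {R S E ι : Type*} [Semiring R] [Semiring S]
    [AddCommMonoid E] [Module R E] [Module S E] [SMul R S] [IsScalarTower R S E]
    (M : Submodule R E) (b : Module.Basis ι R M) :
    span S (M : Set E) = span S (Set.range fun i => (b i : E)) := by
  have hM : span R (Set.range fun i => (b i : E)) = M := by
    rw [show (fun i => (b i : E)) = M.subtype ∘ b from rfl, Set.range_comp, ← Submodule.map_span,
      b.span_eq, Submodule.map_top, Submodule.range_subtype]
  have := Submodule.span_span_of_tower R S (Set.range fun i => (b i : E))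
  rwa [hM] at this

section RationalCombinations

variable {ι E : Type*} [Fintype ι] [NormedAddCommGroup E] [InnerProductSpace ℝ E] [Module ℚ E]

theorem inner_sum_ratCast_smul_right (v : ι → E) (G : Matrix ι ι ℤ)
    (hG : ∀ i j, (G i j : ℝ) = ⟪v i, v j⟫) (c : ι → ℚ) (j : ι) :
    ⟪v j, ∑ i, c i • v i⟫ = ((G.map (↑) *ᵥ c) j : ℚ) := by
  simp only [inner_sum, ← Rat.cast_smul_eq_qsmul ℝ, real_inner_smul_right, ← hG, mulVec,
    dotProduct, Matrix.map_apply, Rat.cast_sum, Rat.cast_mul, Rat.cast_intCast, mul_comm]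

theorem inner_sum_ratCast_smul_self (v : ι → E) (G : Matrix ι ι ℤ)
    (hG : ∀ i j, (G i j : ℝ) = ⟪v i, v j⟫) (c : ι → ℚ) :
    ⟪∑ i, c i • v i, ∑ i, c i • v i⟫ = ((c ⬝ᵥ (G.map (↑) *ᵥ c) : ℚ) : ℝ) := by
  have hright := inner_sum_ratCast_smul_right v G hG c
  simp only [← Rat.cast_smul_eq_qsmul ℝ] at hright ⊢
  simp only [sum_inner, real_inner_smul_left, hright, dotProduct, Rat.cast_sum, Rat.cast_mul]

end RationalCombinations

theorem stmt_4 (m r : ℕ) (L M : Submodule ℤ (EuclideanSpace ℝ (Fin m)))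
    (hint : ∀ u ∈ L, ∀ v ∈ L, ∃ k : ℤ, ⟪u, v⟫ = (k : ℝ))
    (b : Module.Basis (Fin r) ℤ M)
    (G : Matrix (Fin r) (Fin r) ℤ)
    (hG : ∀ i j, (G i j : ℝ) =
      ⟪(b i : EuclideanSpace ℝ (Fin m)), (b j : EuclideanSpace ℝ (Fin m))⟫)
    (hsf : Squarefree G.det) :
    ∀ u ∈ L, u ∈ Submodule.span ℚ (M : Set (EuclideanSpace ℝ (Fin m))) →
      (∀ v ∈ M, ∃ k : ℤ, ⟪u, v⟫ = (k : ℝ)) → u ∈ M := by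
  intro u hu hspan hdual
  rw [M.span_eq_span_range_basis b, Submodule.mem_span_range_iff_exists_fun] at hspan
  obtain ⟨c, rfl⟩ := hspan
  have hGsymm : G.IsSymm := .ext fun i j => Int.cast_injective (α := ℝ) <| by
    rw [hG, hG, real_inner_comm]
  obtain ⟨e, he⟩ : ∃ e : Fin r → ℤ, ∀ i, c i = e i := by
    refine Classical.axiomOfChoice
      (hGsymm.exists_intCast_eq_of_squarefree_det hsf (fun j => ?_) ?_)
    · obtain ⟨z, hz⟩ := hdual (b j) (b j).2
      refine ⟨z, Rat.cast_injective (α := ℝ) ?_⟩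
      rw [← inner_sum_ratCast_smul_right _ G hG, real_inner_comm, hz, Rat.cast_intCast]
    · obtain ⟨N, hN⟩ := hint _ hu _ hu
      refine ⟨N, Rat.cast_injective (α := ℝ) ?_⟩
      rw [← inner_sum_ratCast_smul_self _ G hG, hN, Rat.cast_intCast]
  simp only [he, Int.cast_smul_eq_zsmul]
  exact Submodule.sum_mem _ fun i _ => Submodule.smul_mem _ _ (b i).2
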